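/- arXiv:2101.02129 — 5 statements merged into one kernel-verified Lean document; each statement's English description precedes it below -/
import Mathlib

section
/- For any field F, any tuple a = (a_1, ..., a_m) in F^m with m ≥ 2, and any integer l with 0 ≤ l ≤ m - 1, the following polynomial identity holds in F[X]: V(a) · X^l = Σ_{j=1}^m (-1)^{j+l-1} a_j^l V(â_j) Π_{k≠j} (X + a_k), where V(b_1,...,b_n) = Π_{1≤i<k≤n} (b_k - b_i) is the Vandermonde determinant and â_j is the tuple a with its j-th entry removed. -/
/-!
Let `B = shiftedVandermonde X l a`: its `l`-th column is `(a_j ^ l)_j` and its other columns are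
those of the Vandermonde matrix of size `m - 1`, with row `j` multiplied by `X + a_j`. Expanding
`det B` along column `l` gives the right-hand side. On the other hand
`(X + a_j) a_j ^ i = X a_j ^ i + a_j ^ (i + 1)`, so `B = W L U` with `W` the Vandermonde matrix of
`a`, `L` lower bidiagonal with diagonal `X, …, X, 1, …, 1` (`l` copies of `X`) and `U` upper
unitriangular; hence `det B = V(a) X ^ l`.
-/

/-- The Vandermonde product `V(a) = ∏_{i<j} (a j - a i)`. -/
noncomputable def vdm {F : Type*} [CommRing F] {n : ℕ} (a : Fin n → F) : F :=
  ∏ i : Fin n, ∏ j ∈ Finset.Ioi i, (a j - a i)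

/-- The tuple `â_j` obtained from `a` by deleting its `j`-th entry. -/
def removeNth {F : Type*} {n : ℕ} (a : Fin n → F) (j : Fin n) : Fin (n - 1) → F :=
  fun i =>
    if h : (i : ℕ) < (j : ℕ) then a ⟨i, by have := j.isLt; omega⟩
    else a ⟨i + 1, by have := i.isLt; have := j.isLt; omega⟩

open Matrix Finset

section
variable {R : Type*} [CommRing R] {n : ℕ}

theorem RingHom.map_vdm {S : Type*} [CommRing S] (f : R →+* S) (v : Fin n → R) :
    f (vdm v) = vdm (f ∘ v) := by
  simp [vdm, map_prod, map_sub]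

theorem removeNth_eq_comp_succAbove {α : Type*} (a : Fin (n + 1) → α) (j : Fin (n + 1)) :
    removeNth a j = a ∘ j.succAbove := by
  funext i
  simp only [removeNth, Function.comp_apply, Fin.succAbove, Fin.lt_def, Fin.val_castSucc]
  split_ifs <;> rfl

theorem Fin.prod_succAbove_eq_prod_erase {M : Type*} [CommMonoid M] (f : Fin (n + 1) → M)
    (j : Fin (n + 1)) : ∏ r, f (j.succAbove r) = ∏ k ∈ univ.erase j, f k := by
  rw [← compl_singleton, ← Fin.image_succAbove_univ,
    prod_image Fin.succAbove_right_injective.injOn]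

noncomputable def lowerBidiagonal (x : R) (p : Fin (n + 1)) :
    Matrix (Fin (n + 1)) (Fin (n + 1)) R :=
  of fun k i => if i < p then (if k = i then x else if (k : ℕ) = i + 1 then 1 else 0)
    else if k = i then 1 else 0

noncomputable def upperBidiagonal (x : R) (p : Fin (n + 1)) :
    Matrix (Fin (n + 1)) (Fin (n + 1)) R :=
  of fun k i => if k = i then 1 else if p < i ∧ (k : ℕ) + 1 = i then x else 0

theorem det_lowerBidiagonal (x : R) (p : Fin (n + 1)) :
    (lowerBidiagonal x p).det = x ^ (p : ℕ) := by
  have hL : (lowerBidiagonal x p).IsLowerTriangular := by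
    intro k i hik
    have : (k : ℕ) < i := hik
    simp only [lowerBidiagonal, of_apply]
    split_ifs <;> first | rfl | omega
  rw [det_of_isLowerTriangular _ hL]
  simp [lowerBidiagonal, prod_ite, filter_gt_eq_Iio]

theorem det_upperBidiagonal (x : R) (p : Fin (n + 1)) :
    (upperBidiagonal x p).det = 1 := by
  have hU : (upperBidiagonal x p).IsUpperTriangular := by
    intro k i hik
    have : (i : ℕ) < k := hik
    simp only [upperBidiagonal, of_apply]
    split_ifs <;> first | rfl | omega
  rw [det_of_isUpperTriangular hU]
  simp [upperBidiagonal]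

theorem vandermonde_mul_lowerBidiagonal (x : R) (p : Fin (n + 1)) (v : Fin (n + 1) → R) :
    vandermonde v * lowerBidiagonal x p =
      of fun j i => if i < p then (x + v j) * v j ^ (i : ℕ) else v j ^ (i : ℕ) := by
  ext j i
  simp only [mul_apply, vandermonde_apply, lowerBidiagonal, of_apply]
  split_ifs with hip
  · have hne : (⟨i + 1, by omega⟩ : Fin (n + 1)) ≠ i := by simp [Fin.ext_iff]
    rw [Fintype.sum_eq_add i _ hne.symm]
    · rw [if_pos rfl, if_neg hne, if_pos rfl]
      simp only [pow_succ]
      ring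
    · rintro k ⟨hki, hki'⟩
      have : (k : ℕ) ≠ i + 1 := fun h => hki' (Fin.ext h)
      simp [hki, this]
  · simp

noncomputable def shiftedVandermonde (x : R) (p : Fin (n + 1)) (v : Fin (n + 1) → R) :
    Matrix (Fin (n + 1)) (Fin (n + 1)) R :=
  of fun j => Fin.insertNth p (v j ^ (p : ℕ)) fun c => (x + v j) * v j ^ (c : ℕ)

theorem mul_upperBidiagonal_eq_shiftedVandermonde (x : R) (p : Fin (n + 1))
    (v : Fin (n + 1) → R) :
    (of fun j i => if i < p then (x + v j) * v j ^ (i : ℕ) else v j ^ (i : ℕ)) *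
      upperBidiagonal x p = shiftedVandermonde x p v := by
  ext j i
  simp only [mul_apply, upperBidiagonal, of_apply, shiftedVandermonde]
  rcases Fin.eq_self_or_eq_succAbove p i with rfl | ⟨c, rfl⟩
  · simp
  · rw [Fin.insertNth_apply_succAbove]
    rcases lt_or_ge c.castSucc p with hcp | hpc
    · rw [Fin.succAbove_of_castSucc_lt _ _ hcp]
      simp [hcp, hcp.not_gt]
    · rw [Fin.succAbove_of_le_castSucc _ _ hpc]
      have hps : p < c.succ := hpc.trans_lt c.castSucc_lt_succ
      rw [Fintype.sum_eq_add c.succ c.castSucc c.castSucc_lt_succ.ne']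
      · rw [if_neg hps.not_gt, if_pos rfl, if_neg hpc.not_gt, if_neg c.castSucc_lt_succ.ne,
          if_pos ⟨hps, rfl⟩, Fin.val_succ, Fin.val_castSucc, pow_succ]
        ring
      · rintro k ⟨hks, hkc⟩
        have : (k : ℕ) ≠ c := fun h => hkc (Fin.ext h)
        simp [hks, this]

theorem det_shiftedVandermonde (x : R) (p : Fin (n + 1)) (v : Fin (n + 1) → R) :
    (shiftedVandermonde x p v).det = vdm v * x ^ (p : ℕ) := by
  rw [← mul_upperBidiagonal_eq_shiftedVandermonde, ← vandermonde_mul_lowerBidiagonal, det_mul,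
    det_mul, det_vandermonde, det_lowerBidiagonal, det_upperBidiagonal, mul_one, vdm]

theorem det_shiftedVandermonde_eq_sum (x : R) (p : Fin (n + 1)) (v : Fin (n + 1) → R) :
    (shiftedVandermonde x p v).det = ∑ j : Fin (n + 1), (-1) ^ ((j : ℕ) + p) * v j ^ (p : ℕ) *
      vdm (v ∘ j.succAbove) * ∏ k ∈ univ.erase j, (x + v k) := by
  rw [det_succ_column _ p]
  refine sum_congr rfl fun j _ => ?_
  have hminor : (shiftedVandermonde x p v).submatrix j.succAbove p.succAbove =
      of fun r c => (x + v (j.succAbove r)) * vandermonde (v ∘ j.succAbove) r c := by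
    ext r c
    simp [shiftedVandermonde]
  have hpivot : shiftedVandermonde x p v j p = v j ^ (p : ℕ) := by
    simp [shiftedVandermonde]
  rw [hminor, det_mul_column, det_vandermonde,
    Fin.prod_succAbove_eq_prod_erase (fun k => x + v k), hpivot, ← vdm]
  ring

end

open Polynomial in
/-- `V(a) X^l = ∑_j (-1)^{j+l-1} a_j^l V(â_j) ∏_{k≠j} (X + a_k)`
(indices `j` here are 0-based, so the sign is `(-1)^(j + l)`). -/
theorem stmt0 {F : Type*} [Field F] (m : ℕ) (hm : 2 ≤ m) (a : Fin m → F)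
    (l : ℕ) (hl : l ≤ m - 1) :
    C (vdm a) * X ^ l =
      ∑ j : Fin m,
        C ((-1 : F) ^ (j.val + l) * a j ^ l * vdm (removeNth a j)) *
          ∏ k ∈ Finset.univ.erase j, (X + C (a k)) := by
  obtain ⟨n, rfl⟩ : ∃ n, m = n + 1 := ⟨m - 1, by omega⟩
  have hp : l < n + 1 := by omega
  calc C (vdm a) * X ^ l = (shiftedVandermonde X ⟨l, hp⟩ (C ∘ a)).det := by
        rw [det_shiftedVandermonde, C.map_vdm]
    _ = _ := by
        rw [det_shiftedVandermonde_eq_sum]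
        refine sum_congr rfl fun j _ => ?_
        simp [removeNth_eq_comp_succAbove, C.map_vdm, Function.comp_assoc]
end

section
/- Let a = (a_1, ..., a_m) be a tuple of distinct elements of a field F, m ≥ 2, and let E(a) be the m×m matrix whose (l, j) entry (for l = 0, ..., m-1 and j = 1, ..., m) is e_l(â_j), the l-th elementary symmetric polynomial in the tuple â_j obtained by deleting the j-th entry of a. Then det E(a) = (-1)^{m(m-1)/2} V(a), where V(a) = Π_{1≤j<k≤m}(a_k - a_j). -/
/-- The `l`-th elementary symmetric polynomial evaluated at the tuple `a`. -/
noncomputable def esym {F : Type*} [CommSemiring F] {n : ℕ} (l : ℕ) (a : Fin n → F) : F :=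
  ∑ s ∈ Finset.univ.powersetCard l, ∏ i ∈ s, a i

/-!
Let `P i l = a i ^ (m - 1 - l)` (a Vandermonde matrix with reversed columns) and let `E'` be
`E(a)` with row `l` multiplied by `(-1) ^ l`. By Vieta's formula
`(P * E') i j = ∏_{k ≠ j} (a i - a k)`, which vanishes off the diagonal, so
`det P * det E' = ∏_j ∏_{k ≠ j} (a j - a k) = det P * V(a)`. Since the `a i` are distinct,
`det P ≠ 0`, hence `det E' = V(a)`; the row signs contribute `(-1) ^ (0 + 1 + ⋯ + (m - 1))`.
-/

open Finset Polynomial Matrix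

lemma esym_eq_esymm {R : Type*} [CommSemiring R] {n : ℕ} (l : ℕ) (b : Fin n → R) :
    esym l b = (univ.val.map b).esymm l :=
  (Finset.esymm_map_val b univ l).symm

lemma removeNth_eq_succAbove {α : Type*} {n : ℕ} (a : Fin (n + 1) → α) (j : Fin (n + 1)) :
    removeNth a j = fun k => a (j.succAbove k) := by
  funext k
  simp only [removeNth, Fin.succAbove, Fin.lt_def, Fin.val_castSucc]
  split_ifs <;> rfl

lemma prod_succAbove_eq_prod_Iio_mul_prod_Ioi {M : Type*} [CommMonoid M] {n : ℕ}
    (f : Fin (n + 1) → M) (j : Fin (n + 1)) :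
    ∏ k, f (j.succAbove k) = (∏ i ∈ Iio j, f i) * ∏ i ∈ Ioi j, f i := by
  rw [← prod_image Fin.succAbove_right_injective.injOn, Fin.image_succAbove_univ,
    ← prod_union (disjoint_left.2 fun i hi hi' => (mem_Iio.1 hi).asymm (mem_Ioi.1 hi'))]
  congr 1
  ext i
  simp

section CommRing

variable {R : Type*} [CommRing R] {n : ℕ}

lemma sum_neg_one_pow_mul_esym_mul_pow (b : Fin n → R) (x : R) :
    ∑ l : Fin (n + 1), (-1) ^ (l : ℕ) * esym l b * x ^ (n - l) = ∏ k, (x - b k) := by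
  have := congrArg (eval x) (Multiset.prod_X_sub_X_eq_sum_esymm (univ.val.map b))
  rw [eval_multiset_prod, Multiset.map_map, eval_finsetSum] at this
  rw [Fin.sum_univ_eq_sum_range (fun l => (-1 : R) ^ l * esym l b * x ^ (n - l)), Finset.prod]
  simpa [esym_eq_esymm, mul_assoc, Function.comp_def] using this.symm

lemma prod_prod_succAbove_sub (a : Fin (n + 1) → R) :
    ∏ j, ∏ k, (a j - a (j.succAbove k)) = (∏ i, ∏ j ∈ Ioi i, (a i - a j)) * vdm a := by
  rw [prod_congr rfl fun j _ => prod_succAbove_eq_prod_Iio_mul_prod_Ioi (fun i => a j - a i) j,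
    prod_mul_distrib, mul_comm, vdm]
  congr 1
  exact prod_comm' (by simp)

lemma det_of_neg_one_pow_mul (M : Matrix (Fin n) (Fin n) R) :
    det (of fun (i j : Fin n) => (-1) ^ (i : ℕ) * M i j) = (-1) ^ (n * (n - 1) / 2) * det M := by
  rw [det_mul_column, prod_pow_eq_pow_sum, Fin.sum_univ_eq_sum_range (fun i => i), sum_range_id]

noncomputable def signedEsymMatrix (a : Fin n → R) : Matrix (Fin n) (Fin n) R :=
  of fun l j => (-1) ^ (l : ℕ) * esym l (removeNth a j)

-- `projVandermonde (fun _ => 1) a` is the matrix `P` of the header: `(i, l) ↦ a i ^ (n - l)`.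
lemma projVandermonde_mul_signedEsymMatrix (a : Fin (n + 1) → R) :
    projVandermonde (fun _ => 1) a * signedEsymMatrix a =
      diagonal fun j => ∏ k, (a j - a (j.succAbove k)) := by
  ext i j
  have hterm : ∀ l, projVandermonde (fun _ => 1) a i l * signedEsymMatrix a l j =
      (-1) ^ (l : ℕ) * esym l (removeNth a j) * a i ^ (n - l) := by
    intro l
    simp only [signedEsymMatrix, of_apply, projVandermonde_apply, one_pow, one_mul, Fin.val_rev,
      Nat.add_sub_add_right]
    ring
  simp only [mul_apply, hterm]
  rw [sum_neg_one_pow_mul_esym_mul_pow]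
  simp only [removeNth_eq_succAbove]
  rcases eq_or_ne j i with rfl | hji
  · rw [diagonal_apply_eq]
  · obtain ⟨k, hk⟩ := Fin.exists_succAbove_eq hji.symm
    rw [diagonal_apply_ne _ hji.symm]
    exact prod_eq_zero (mem_univ k) (by rw [hk, sub_self])

lemma det_signedEsymMatrix [IsDomain R] {a : Fin (n + 1) → R} (ha : Function.Injective a) :
    det (signedEsymMatrix a) = vdm a := by
  have hP : det (projVandermonde (fun _ => 1) a) = ∏ i, ∏ j ∈ Ioi i, (a i - a j) := by
    simp [det_projVandermonde]
  have hP_ne : ∏ i, ∏ j ∈ Ioi i, (a i - a j) ≠ 0 :=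
    prod_ne_zero_iff.2 fun i _ => prod_ne_zero_iff.2 fun j hj =>
      sub_ne_zero.2 (ha.ne (mem_Ioi.1 hj).ne)
  have hdet := congrArg det (projVandermonde_mul_signedEsymMatrix a)
  rw [det_mul, hP, det_diagonal, prod_prod_succAbove_sub] at hdet
  exact mul_left_cancel₀ hP_ne hdet

end CommRing

theorem stmt1_general {F : Type*} [Field F] (m : ℕ) (a : Fin m → F)
    (ha : Function.Injective a) :
    Matrix.det (Matrix.of fun l j : Fin m => esym l.val (removeNth a j)) =
      (-1 : F) ^ (m * (m - 1) / 2) * vdm a := by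
  cases m with
  | zero => simp [vdm]
  | succ n =>
    have hsign : of (fun l j : Fin (n + 1) => esym l.val (removeNth a j)) =
        of fun (l j : Fin (n + 1)) => (-1) ^ (l : ℕ) * signedEsymMatrix a l j := by
      ext l j
      simp [signedEsymMatrix, ← mul_assoc, ← mul_pow]
    rw [hsign, det_of_neg_one_pow_mul, det_signedEsymMatrix ha]

/-- `det E(a) = (-1)^{m(m-1)/2} V(a)`, where `E(a)` has `(l, j)` entry `e_l(â_j)`. -/
theorem stmt1 {F : Type*} [Field F] (m : ℕ) (hm : 2 ≤ m) (a : Fin m → F)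
    (ha : Function.Injective a) :
    Matrix.det (Matrix.of fun l j : Fin m => esym l.val (removeNth a j)) =
      (-1 : F) ^ (m * (m - 1) / 2) * vdm a :=
  stmt1_general m a ha
end

section
/- Let X_1, ..., X_m be independent exponential random variables with mean 1 and let α_1, ..., α_m > 0. Then for every non-negative integer p, E[(Σ_{j=1}^m α_j X_j)^p] = p! · h_p(α_1, ..., α_m), where h_p is the complete homogeneous symmetric polynomial of degree p. -/
/-!
Expand the power over words `f : Fin p → Fin m`. By independence and `E[X^k] = k!`, the word `f`
contributes `(∏_i α_{f i}) ∏_j c_j(f)!`, where `c_j(f)` is the number of letters `j` in `f`.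
Now `∏_j c_j(f)!` is the order of the stabilizer of `f` in `S_p`, which is also the number of ways
to write `f = g ∘ σ` with `g` monotone and `σ ∈ S_p` (the monotone factor is forced to be `f`
sorted). Summing over the pairs `(g, σ)` instead of over `f` gives
`p! ∑_{g monotone} ∏_i α_{g i} = p! h_p(α)`.
-/

/-- The `l`-th complete homogeneous symmetric polynomial evaluated at the tuple `a`. -/
noncomputable def hsym {F : Type*} [CommSemiring F] {n : ℕ} (l : ℕ) (a : Fin n → F) : F :=
  ∑ f ∈ Finset.univ.filter (fun f : Fin l → Fin n => ∀ i j : Fin l, i ≤ j → f i ≤ f j),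
    ∏ i, a (f i)

open MeasureTheory ProbabilityTheory Real Finset Equiv

namespace ProbabilityTheory

lemma measurable_gammaPDF (a r : ℝ) : Measurable (gammaPDF a r) :=
  (measurable_gammaPDFReal a r).ennreal_ofReal

lemma exponentialPDFReal_mul_pow (r : ℝ) (k : ℕ) :
    (fun x => exponentialPDFReal r x * x ^ k) =
      (Set.Ici 0).indicator fun x => r * (x ^ k * exp (-(r * x))) := by
  ext x
  by_cases hx : 0 ≤ x <;> simp [exponentialPDFReal, gammaPDFReal, hx]
  ring

lemma integral_expMeasure {r : ℝ} (hr : 0 < r) (g : ℝ → ℝ) :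
    ∫ x, g x ∂expMeasure r = ∫ x, exponentialPDFReal r x * g x := by
  rw [expMeasure, gammaMeasure, integral_withDensity_eq_integral_toReal_smul
    (measurable_gammaPDF 1 r) (.of_forall fun _ => ENNReal.ofReal_lt_top)]
  simp_rw [gammaPDF, ENNReal.toReal_ofReal (gammaPDFReal_nonneg one_pos hr _), smul_eq_mul]
  rfl

lemma integrable_expMeasure_iff {r : ℝ} (hr : 0 < r) (g : ℝ → ℝ) :
    Integrable g (expMeasure r) ↔ Integrable fun x => exponentialPDFReal r x * g x := by
  rw [expMeasure, gammaMeasure, integrable_withDensity_iff_integrable_smul'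
    (measurable_gammaPDF 1 r) (.of_forall fun _ => ENNReal.ofReal_lt_top)]
  simp_rw [gammaPDF, ENNReal.toReal_ofReal (gammaPDFReal_nonneg one_pos hr _), smul_eq_mul]
  rfl

lemma integrable_pow_expMeasure {r : ℝ} (hr : 0 < r) (k : ℕ) :
    Integrable (fun x : ℝ => x ^ k) (expMeasure r) := by
  rw [integrable_expMeasure_iff hr, exponentialPDFReal_mul_pow]
  refine IntegrableOn.integrable_indicator ?_ measurableSet_Ici
  rw [integrableOn_Ici_iff_integrableOn_Ioi]
  refine (IntegrableOn.congr_fun (f := fun x => x ^ (k : ℝ) * exp (-r * x ^ (1 : ℝ))) ?_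
    (fun x _ => ?_) measurableSet_Ioi).const_mul r
  · exact integrableOn_rpow_mul_exp_neg_mul_rpow (by linarith [k.cast_nonneg (α := ℝ)]) one_pos hr
  · simp [rpow_natCast]

lemma integral_pow_expMeasure {r : ℝ} (hr : 0 < r) (k : ℕ) :
    ∫ x, x ^ k ∂expMeasure r = k.factorial / r ^ k := by
  rw [integral_expMeasure hr, exponentialPDFReal_mul_pow, integral_indicator measurableSet_Ici,
    integral_Ici_eq_integral_Ioi, integral_const_mul]
  have hGamma := integral_rpow_mul_exp_neg_mul_Ioi (a := k + 1) (by positivity) hr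
  rw [add_sub_cancel_right, Gamma_nat_eq_factorial, ← Nat.cast_succ, rpow_natCast] at hGamma
  rw [setIntegral_congr_fun measurableSet_Ioi (fun x _ => by rw [← rpow_natCast]),
    hGamma, one_div, inv_pow, pow_succ]
  field_simp

lemma expMeasure_one :
    expMeasure 1 = volume.withDensity fun x => ENNReal.ofReal (if 0 ≤ x then exp (-x) else 0) := by
  change volume.withDensity (exponentialPDF 1) = _
  congr 1 with x
  simp [exponentialPDF_eq]

variable {Ω ι : Type*} [MeasurableSpace Ω] {μ : Measure Ω} [Fintype ι] {𝓧 : ι → Type*}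
  {m𝓧 : ∀ i, MeasurableSpace (𝓧 i)} {X : (i : ι) → Ω → 𝓧 i}
  {𝕜 : Type*} [NormedCommRing 𝕜] {f : (i : ι) → 𝓧 i → 𝕜}

lemma iIndepFun.integrable_fun_prod_comp (hX : iIndepFun X μ) (mX : ∀ i, AEMeasurable (X i) μ)
    (hf : ∀ i, Integrable (f i) (μ.map (X i))) :
    Integrable (fun ω => ∏ i, f i (X i ω)) μ := by
  have := hX.isProbabilityMeasure
  have hmap : μ.map (fun ω i => X i ω) = Measure.pi fun i => μ.map (X i) :=
    hX.map_fun_eq_pi_map mX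
  refine (integrable_map_measure (g := fun x : (i : ι) → 𝓧 i => ∏ i, f i (x i)) ?_ ?_).1 ?_
  · rw [hmap]
    exact Finset.aestronglyMeasurable_fun_prod univ fun i _ ↦
      (hf i).1.comp_quasiMeasurePreserving (Measure.quasiMeasurePreserving_eval _ i)
  · fun_prop
  · rw [hmap]
    exact Integrable.fintype_prod_dep hf

end ProbabilityTheory

lemma hsym_eq_sum_monotone {F : Type*} [CommSemiring F] {n l : ℕ}
    [DecidablePred (Monotone : (Fin l → Fin n) → Prop)] (a : Fin n → F) :
    hsym l a = ∑ g : Fin l → Fin n with Monotone g, ∏ i, a (g i) := by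
  rw [hsym]
  congr! 2

namespace Tuple

variable {n : ℕ} {β : Type*} [LinearOrder β]

lemma eq_comp_sort_of_monotone_comp {f g : Fin n → β} {σ : Perm (Fin n)} (hg : Monotone g)
    (h : g ∘ σ = f) : g = f ∘ sort f := by
  have hg' : g = f ∘ ⇑(σ⁻¹ : Perm (Fin n)) := by rw [← h]; ext; simp
  exact hg'.trans (comp_sort_eq_comp_iff_monotone.2 (hg' ▸ hg))

def monotoneCompEquivStabilizer (f : Fin n → β) :
    {x : (Fin n → β) × Perm (Fin n) // Monotone x.1 ∧ x.1 ∘ x.2 = f} ≃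
      {σ : Perm (Fin n) // f ∘ σ = f} where
  toFun x := ⟨sort f * x.1.2, by
    obtain ⟨⟨g, σ⟩, hg, hgσ⟩ := x
    conv_rhs => rw [← hgσ, eq_comp_sort_of_monotone_comp hg hgσ]
    rfl⟩
  invFun σ := ⟨(f ∘ sort f, (sort f)⁻¹ * σ.1), monotone_sort f, by
    ext; simpa using congrFun σ.2 _⟩
  left_inv x := by
    obtain ⟨⟨g, σ⟩, hg, hgσ⟩ := x
    ext : 2
    · exact (eq_comp_sort_of_monotone_comp hg hgσ).symm
    · simp
  right_inv σ := by ext; simp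

end Tuple

section Combinatorics

variable {R : Type*} [CommSemiring R]

lemma sum_card_stabilizer_mul {n : ℕ} {β : Type*} [LinearOrder β] [Fintype β]
    [DecidablePred (Monotone : (Fin n → β) → Prop)]
    (φ : (Fin n → β) → R) (hφ : ∀ g (σ : Perm (Fin n)), φ (g ∘ σ) = φ g) :
    ∑ f, (Nat.card {σ : Perm (Fin n) // f ∘ σ = f} : R) * φ f =
      n.factorial * ∑ g : Fin n → β with Monotone g, φ g := by
  classical
  have hfiber (f : Fin n → β) : Nat.card {σ : Perm (Fin n) // f ∘ σ = f} =
      #{x : (Fin n → β) × Perm (Fin n) | Monotone x.1 ∧ x.1 ∘ x.2 = f} := by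
    rw [← Nat.card_congr (Tuple.monotoneCompEquivStabilizer f), Nat.card_eq_fintype_card,
      Fintype.card_subtype]
  calc ∑ f, (Nat.card {σ : Perm (Fin n) // f ∘ σ = f} : R) * φ f
      = ∑ f, ∑ x : (Fin n → β) × Perm (Fin n) with Monotone x.1 ∧ x.1 ∘ x.2 = f,
          φ (x.1 ∘ x.2) := by
        refine Fintype.sum_congr _ _ fun f => ?_
        rw [hfiber, ← nsmul_eq_mul, ← sum_const]
        exact sum_congr rfl fun x hx => by rw [(mem_filter.1 hx).2.2]
    _ = ∑ x : (Fin n → β) × Perm (Fin n) with Monotone x.1, φ (x.1 ∘ x.2) := by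
        simp_rw [← filter_filter]
        exact sum_fiberwise _ _ _
    _ = n.factorial * ∑ g : Fin n → β with Monotone g, φ g := by
        rw [← univ_product_univ, filter_product_left, sum_product, mul_sum]
        simp [hφ, Fintype.card_perm]

lemma sum_prod_factorial_card_fiber_mul_prod {m : ℕ} (α : Fin m → R) (p : ℕ) :
    ∑ f : Fin p → Fin m, (∏ j, ((#{i | f i = j}).factorial : R)) * ∏ i, α (f i) =
      p.factorial * hsym p α := by
  classical
  rw [hsym_eq_sum_monotone,
    ← sum_card_stabilizer_mul _ fun g σ => Equiv.prod_comp σ fun i => α (g i)]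
  refine Fintype.sum_congr _ _ fun f => ?_
  rw [Nat.card_eq_fintype_card, DomMulAct.stabilizer_card]
  simp [Fintype.card_subtype]

lemma prod_comp_eq_prod_pow_card {ι κ M : Type*} [Fintype ι] [Fintype κ] [DecidableEq κ]
    [CommMonoid M] (x : κ → M) (f : ι → κ) : ∏ i, x (f i) = ∏ j, x j ^ #{i | f i = j} := by
  rw [← prod_fiberwise univ f fun i => x (f i)]
  refine prod_congr rfl fun j _ => ?_
  rw [prod_congr rfl fun i hi => by rw [(mem_filter.1 hi).2], prod_const]

lemma sum_mul_pow_eq_sum_prod_pow_card {ι : Type*} [Fintype ι] [DecidableEq ι] (a x : ι → R)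
    (p : ℕ) :
    (∑ j, a j * x j) ^ p = ∑ f : Fin p → ι, (∏ i, a (f i)) * ∏ j, x j ^ #{i | f i = j} := by
  simp_rw [Fintype.sum_pow, prod_mul_distrib, prod_comp_eq_prod_pow_card x]

end Combinatorics

theorem stmt12_general {Ω : Type*} [MeasureSpace Ω]
    (m : ℕ) (X : Fin m → Ω → ℝ) (hmeas : ∀ j, Measurable (X j))
    (hindep : iIndepFun X volume)
    (hexp : ∀ j, Measure.map (X j) volume =
      volume.withDensity fun x => ENNReal.ofReal (if 0 ≤ x then Real.exp (-x) else 0))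
    (α : Fin m → ℝ) (p : ℕ) :
    ∫ ω, (∑ j : Fin m, α j * X j ω) ^ p = (p.factorial : ℝ) * hsym p α := by
  have hlaw (j : Fin m) : volume.map (X j) = expMeasure 1 := (hexp j).trans expMeasure_one.symm
  have hint (j : Fin m) (k : ℕ) : Integrable (fun x : ℝ => x ^ k) (volume.map (X j)) :=
    hlaw j ▸ integrable_pow_expMeasure one_pos k
  have hmom (j : Fin m) (k : ℕ) : ∫ ω, X j ω ^ k = k.factorial := by
    rw [← integral_map (hmeas j).aemeasurable (hint j k).1, hlaw, integral_pow_expMeasure one_pos,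
      one_pow, div_one]
  have mX (j : Fin m) : AEMeasurable (X j) := (hmeas j).aemeasurable
  simp_rw [sum_mul_pow_eq_sum_prod_pow_card]
  rw [integral_finsetSum _ fun f _ =>
    (hindep.integrable_fun_prod_comp mX fun j => hint j _).const_mul _]
  simp_rw [integral_const_mul, hindep.integral_fun_prod_comp mX fun j => (hint j _).1, hmom,
    ← sum_prod_factorial_card_fiber_mul_prod, mul_comm]

/-- If `X_1, …, X_m` are i.i.d. mean-1 exponential random variables and `α_j > 0`,
then `E[(∑_j α_j X_j)^p] = p! h_p(α)`. -/
theorem stmt12 {Ω : Type*} [MeasureSpace Ω]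
    (hprob : IsProbabilityMeasure (volume : Measure Ω))
    (m : ℕ) (hm : 2 ≤ m) (X : Fin m → Ω → ℝ) (hmeas : ∀ j, Measurable (X j))
    (hindep : iIndepFun X volume)
    (hexp : ∀ j, Measure.map (X j) volume =
      volume.withDensity fun x => ENNReal.ofReal (if 0 ≤ x then Real.exp (-x) else 0))
    (α : Fin m → ℝ) (hα : ∀ j, 0 < α j) (p : ℕ) :
    ∫ ω, (∑ j : Fin m, α j * X j ω) ^ p = (p.factorial : ℝ) * hsym p α :=
  stmt12_general m X hmeas hindep hexp α p
end

section
/- Let α = (α_1, ..., α_m) ∈ (0, ∞)^m, m ≥ 2, and let μ_p = p! h_p(α) be the p-th moment of the Hirschman–Widder density Λ_α. Then the tuple α is determined up to permutation by the first m moments μ_1, ..., μ_m: there exist polynomial functions f_1, ..., f_m such that e_l(α) = f_l(μ_1, ..., μ_l) for each l, hence the polynomial F(t) = 1 + Σ_{l=1}^m f_l(μ_1,...,μ_l) t^l factors as Π_{j=1}^m (1 + α_j t). -/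
/-- The `p`-th moment `μ_p = p! h_p(α)` of the Hirschman–Widder density `Λ_α`. -/
noncomputable def hwMoment {m : ℕ} (α : Fin m → ℝ) (p : ℕ) : ℝ :=
  (p.factorial : ℝ) * hsym p α

/-- The `l × l` Toeplitz matrix with `(i, j)` entry `μ_{i-j+1} / (i-j+1)!`
(1 on the superdiagonal, 0 above it). -/
noncomputable def momentToeplitz {m : ℕ} (α : Fin m → ℝ) (l : ℕ) :
    Matrix (Fin l) (Fin l) ℝ :=
  Matrix.of fun i j =>
    if (j : ℕ) ≤ (i : ℕ) + 1 then
      hwMoment α ((i : ℕ) + 1 - (j : ℕ)) / (((i : ℕ) + 1 - (j : ℕ)).factorial : ℝ)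
    else 0

/-! The generating function `∑ h_p X^p` of the complete homogeneous symmetric polynomials is
the inverse of `∏ (1 - a_j X) = ∑ (-1)^l e_l X^l`. Lower-triangular Toeplitz matrices multiply
like the power series they are built from, so the Toeplitz matrices of these two series are
mutually inverse. Since `μ_k / k! = h_k`, the matrix `D_l` is the minor of the first one with its
first row and last column removed; by the adjugate formula for the inverse, `det D_l` is `(-1)^l`
times the bottom-left entry of the second matrix, which is `(-1)^l e_l`. -/

open Finset PowerSeries

section SymmetricFunctions

variable {R : Type*} [CommSemiring R] {n : ℕ}

theorem esym_zero (a : Fin n → R) : esym 0 a = 1 := by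
  simp [esym]

theorem esym_eq_zero_of_lt {l : ℕ} (hl : n < l) (a : Fin n → R) : esym l a = 0 := by
  rw [esym, powersetCard_eq_empty.2 (by simpa using hl), sum_empty]

theorem map_esym {S : Type*} [CommSemiring S] (φ : R →+* S) (l : ℕ) (a : Fin n → R) :
    φ (esym l a) = esym l (φ ∘ a) := by
  simp [esym, map_sum, map_prod]

theorem prod_one_add_mul_eq_sum_esym (a : Fin n → R) (t : R) :
    ∏ j, (1 + a j * t) = ∑ l ∈ range (n + 1), esym l a * t ^ l := by
  rw [prod_one_add, sum_powerset, card_univ, Fintype.card_fin]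
  refine sum_congr rfl fun l _ => ?_
  rw [esym, sum_mul]
  refine sum_congr rfl fun s hs => ?_
  rw [prod_mul_distrib, prod_const, (mem_powersetCard.1 hs).2]

theorem hsym_zero (a : Fin n → R) : hsym 0 a = 1 := by
  rw [hsym, filter_true_of_mem fun f _ i => i.elim0]
  simp

theorem hsym_succ_of_fin_zero (p : ℕ) (a : Fin 0 → R) : hsym (p + 1) a = 0 := by
  simp [hsym]

theorem sum_monotone_last_eq_last (p : ℕ) (a : Fin n → R) (x : R) :
    ∑ f : Fin (p + 1) → Fin (n + 1) with
        (∀ i j, i ≤ j → f i ≤ f j) ∧ f (Fin.last p) = Fin.last n,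
      ∏ i, Fin.snoc (α := fun _ => R) a x (f i) = x * hsym p (Fin.snoc a x) := by
  rw [hsym, mul_sum]
  refine sum_nbij' Fin.init (fun g => Fin.snoc g (Fin.last n)) ?_ ?_ ?_ ?_ ?_
  · intro f hf
    simp only [mem_filter, mem_univ, true_and] at hf ⊢
    exact fun i j hij => hf.1 _ _ (Fin.castSucc_le_castSucc_iff.2 hij)
  · intro g hg
    simp only [mem_filter, mem_univ, true_and] at hg ⊢
    refine ⟨fun i j hij => ?_, Fin.snoc_last _ _⟩
    induction j using Fin.lastCases with
    | last => simpa using Fin.le_last _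
    | cast j =>
      induction i using Fin.lastCases with
      | last => exact absurd hij (Fin.castSucc_lt_last j).not_ge
      | cast i => simpa using hg _ _ (Fin.castSucc_le_castSucc_iff.1 hij)
  · intro f hf
    simp only [mem_filter, mem_univ, true_and] at hf
    rw [← hf.2, Fin.snoc_init_self]
  · intro g _
    exact Fin.init_snoc _ _
  · intro f hf
    simp only [mem_filter, mem_univ, true_and] at hf
    rw [Fin.prod_univ_castSucc, hf.2, Fin.snoc_last, mul_comm]
    rfl

theorem sum_monotone_last_ne_last (p : ℕ) (a : Fin n → R) (x : R) :
    ∑ f : Fin (p + 1) → Fin (n + 1) with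
        (∀ i j, i ≤ j → f i ≤ f j) ∧ f (Fin.last p) ≠ Fin.last n,
      ∏ i, Fin.snoc (α := fun _ => R) a x (f i) = hsym (p + 1) a := by
  rw [hsym]
  symm
  refine sum_bij (fun g _ => Fin.castSucc ∘ g) ?_ ?_ ?_ ?_
  · intro g hg
    simp only [mem_filter, mem_univ, true_and] at hg ⊢
    exact ⟨fun i j hij => Fin.castSucc_le_castSucc_iff.2 (hg i j hij),
      (Fin.castSucc_lt_last _).ne⟩
  · intro g₁ _ g₂ _ h
    exact funext fun k => Fin.castSucc_injective _ (congrFun h k)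
  · intro f hf
    simp only [mem_filter, mem_univ, true_and] at hf
    have hlt : ∀ k, f k ≠ Fin.last n := fun k =>
      ((hf.1 _ _ (Fin.le_last k)).trans_lt ((Fin.le_last _).lt_of_ne hf.2)).ne
    refine ⟨fun k => (f k).castPred (hlt k), ?_, funext fun k => Fin.castSucc_castPred _ _⟩
    simp only [mem_filter, mem_univ, true_and]
    exact fun i j hij => Fin.castPred_le_castPred_iff.2 (hf.1 i j hij)
  · intro g _
    simp

theorem hsym_succ_snoc (p : ℕ) (a : Fin n → R) (x : R) :
    hsym (p + 1) (Fin.snoc a x) = hsym (p + 1) a + x * hsym p (Fin.snoc a x) := by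
  rw [hsym, ← sum_filter_add_sum_filter_not _ fun f => f (Fin.last p) = Fin.last n,
    filter_filter, filter_filter, sum_monotone_last_eq_last, sum_monotone_last_ne_last,
    add_comm]

end SymmetricFunctions

section GeneratingFunctions

variable {R : Type*} [CommRing R]

theorem esym_neg {n : ℕ} (l : ℕ) (a : Fin n → R) :
    esym l (-a) = (-1) ^ l * esym l a := by
  rw [esym, esym, mul_sum]
  refine sum_congr rfl fun s hs => ?_
  simp [prod_neg, (mem_powersetCard.1 hs).2]

noncomputable def hsymSeries {n : ℕ} (a : Fin n → R) : R⟦X⟧ :=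
  PowerSeries.mk fun p => hsym p a

theorem one_sub_mul_hsymSeries_snoc {n : ℕ} (a : Fin n → R) (x : R) :
    (1 - C x * X) * hsymSeries (Fin.snoc a x) = hsymSeries a := by
  ext (_ | p)
  · simp [hsymSeries, hsym_zero]
  · rw [sub_mul, one_mul, map_sub, mul_assoc, coeff_C_mul, coeff_succ_X_mul]
    simp only [hsymSeries, coeff_mk]
    rw [hsym_succ_snoc, add_sub_cancel_right]

theorem prod_one_sub_mul_hsymSeries {n : ℕ} (a : Fin n → R) :
    (∏ j, (1 - C (a j) * X)) * hsymSeries a = 1 := by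
  induction n with
  | zero =>
    ext (_ | p)
    · simp [hsymSeries, hsym_zero]
    · simp [hsymSeries, hsym_succ_of_fin_zero]
  | succ n ih =>
    rw [← Fin.snoc_init_self a, Fin.prod_univ_castSucc]
    simp only [Fin.snoc_castSucc, Fin.snoc_last]
    rw [mul_assoc, one_sub_mul_hsymSeries_snoc, ih]

theorem coeff_prod_one_sub {n : ℕ} (a : Fin n → R) (l : ℕ) :
    coeff l (∏ j, (1 - C (a j) * X)) = (-1) ^ l * esym l a := by
  have h : ∏ j, (1 - C (a j) * X) = ∏ j, (1 + (C ∘ (-a)) j * X) := by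
    simp [sub_eq_add_neg]
  rw [h, prod_one_add_mul_eq_sum_esym]
  simp only [← map_esym, esym_neg, map_sum, coeff_C_mul_X_pow, sum_ite_eq, mem_range]
  split_ifs with hl
  · rfl
  · rw [esym_eq_zero_of_lt (by omega), mul_zero]

end GeneratingFunctions

section Toeplitz

variable {R : Type*}

noncomputable def lowerToeplitz [Semiring R] (f : R⟦X⟧) (n : ℕ) : Matrix (Fin n) (Fin n) R :=
  Matrix.of fun i j => if j ≤ i then coeff ((i : ℕ) - j) f else 0

theorem coeff_mul_eq_sum_Icc [Semiring R] (f g : R⟦X⟧) {k i : ℕ} (hki : k ≤ i) :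
    coeff (i - k) (f * g) = ∑ j ∈ Icc k i, coeff (i - j) f * coeff (j - k) g := by
  rw [coeff_mul]
  refine sum_nbij' (fun pq : ℕ × ℕ => k + pq.2) (fun j => (i - j, j - k)) ?_ ?_ ?_ ?_ ?_
  all_goals intro x hx
  all_goals simp only [HasAntidiagonal.mem_antidiagonal, mem_Icc, Prod.ext_iff] at hx ⊢
  · omega
  · omega
  · omega
  · omega
  · rw [Nat.add_sub_cancel_left, show i - (k + x.2) = x.1 by omega]

theorem lowerToeplitz_mul [Semiring R] (f g : R⟦X⟧) (n : ℕ) :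
    lowerToeplitz (f * g) n = lowerToeplitz f n * lowerToeplitz g n := by
  ext i k
  simp only [lowerToeplitz, Matrix.mul_apply, Matrix.of_apply, ite_mul, mul_ite, zero_mul,
    mul_zero, ← ite_and]
  rw [← sum_filter, filter_le_le_eq_Icc]
  split_ifs with hki
  · rw [coeff_mul_eq_sum_Icc _ _ hki, ← Fin.map_valEmbedding_Icc, sum_map]
    rfl
  · rw [Icc_eq_empty hki, sum_empty]

theorem lowerToeplitz_one [Semiring R] (n : ℕ) : lowerToeplitz (1 : R⟦X⟧) n = 1 := by
  ext i j
  simp only [lowerToeplitz, Matrix.of_apply, coeff_one, Matrix.one_apply, Fin.ext_iff,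
    Fin.le_def]
  split_ifs <;> first | rfl | omega

variable [CommRing R]

theorem det_lowerToeplitz (f : R⟦X⟧) (n : ℕ) : (lowerToeplitz f n).det = coeff 0 f ^ n := by
  have hlow : (lowerToeplitz f n).IsLowerTriangular := fun i j hij => if_neg (not_le.2 hij)
  rw [Matrix.det_of_isLowerTriangular _ hlow]
  simp [lowerToeplitz]

theorem adjugate_lowerToeplitz {f g : R⟦X⟧} (hfg : f * g = 1) (n : ℕ) :
    (lowerToeplitz g n).adjugate = coeff 0 g ^ n • lowerToeplitz f n := by
  calc (lowerToeplitz g n).adjugate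
      = (lowerToeplitz g n).adjugate * (lowerToeplitz g n * lowerToeplitz f n) := by
        rw [← lowerToeplitz_mul, mul_comm, hfg, lowerToeplitz_one, mul_one]
    _ = coeff 0 g ^ n • lowerToeplitz f n := by
        rw [← mul_assoc, Matrix.adjugate_mul, det_lowerToeplitz, smul_mul_assoc, one_mul]

theorem det_submatrix_succ_castSucc_lowerToeplitz {f g : R⟦X⟧} (hfg : f * g = 1) (l : ℕ) :
    ((lowerToeplitz g (l + 1)).submatrix Fin.succ Fin.castSucc).det =
      (-1) ^ l * coeff 0 g ^ (l + 1) * coeff l f := by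
  have hcorner : lowerToeplitz f (l + 1) (Fin.last l) 0 = coeff l f := by
    simp [lowerToeplitz]
  have h := Matrix.adjugate_fin_succ_eq_det_submatrix (lowerToeplitz g (l + 1)) (Fin.last l) 0
  rw [adjugate_lowerToeplitz hfg, Matrix.smul_apply, hcorner, smul_eq_mul, Fin.succAbove_zero,
    Fin.succAbove_last, Fin.val_zero, Fin.val_last, zero_add] at h
  rw [mul_assoc, h, ← mul_assoc, ← mul_pow, neg_one_mul, neg_neg, one_pow, one_mul]

end Toeplitz

theorem momentToeplitz_eq_submatrix_lowerToeplitz {m : ℕ} (α : Fin m → ℝ) (l : ℕ) :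
    momentToeplitz α l =
      (lowerToeplitz (hsymSeries α) (l + 1)).submatrix Fin.succ Fin.castSucc := by
  ext i j
  simp only [momentToeplitz, lowerToeplitz, hsymSeries, hwMoment, Matrix.of_apply,
    Matrix.submatrix_apply, coeff_mk, Fin.le_def, Fin.val_succ, Fin.val_castSucc]
  split_ifs
  · field_simp
  · rfl

theorem det_momentToeplitz {m : ℕ} (α : Fin m → ℝ) (l : ℕ) :
    (momentToeplitz α l).det = esym l α := by
  rw [momentToeplitz_eq_submatrix_lowerToeplitz,
    det_submatrix_succ_castSucc_lowerToeplitz (prod_one_sub_mul_hsymSeries α),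
    coeff_prod_one_sub, hsymSeries, coeff_mk, hsym_zero, one_pow, mul_one, ← mul_assoc,
    ← mul_pow, neg_one_mul, neg_neg, one_pow, one_mul]

theorem stmt15_general (m : ℕ) (α : Fin m → ℝ) :
    (∀ l : ℕ, 1 ≤ l → l ≤ m → esym l α = (momentToeplitz α l).det) ∧
    ∀ t : ℝ, 1 + ∑ l ∈ Finset.Icc 1 m, (momentToeplitz α l).det * t ^ l =
      ∏ j : Fin m, (1 + α j * t) := by
  refine ⟨fun l _ _ => (det_momentToeplitz α l).symm, fun t => ?_⟩
  rw [prod_one_add_mul_eq_sum_esym, range_eq_Ico, sum_eq_sum_Ico_succ_bot m.succ_pos,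
    esym_zero, pow_zero, mul_one, zero_add, Nat.succ_eq_add_one, Ico_add_one_right_eq_Icc]
  simp only [det_momentToeplitz]

/-- The tuple `α` is determined up to permutation by the moments `μ_1, …, μ_m`:
with `f_l(μ_1, …, μ_l) = det D_l` one has `e_l(α) = det D_l` for `l = 1, …, m`, and
hence `F(t) = 1 + ∑_{l=1}^m (det D_l) t^l = ∏_j (1 + α_j t)`. -/
theorem stmt15 (m : ℕ) (hm : 2 ≤ m) (α : Fin m → ℝ) (hα : ∀ j, 0 < α j) :
    (∀ l : ℕ, 1 ≤ l → l ≤ m → esym l α = (momentToeplitz α l).det) ∧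
    ∀ t : ℝ, 1 + ∑ l ∈ Finset.Icc 1 m, (momentToeplitz α l).det * t ^ l =
      ∏ j : Fin m, (1 + α j * t) :=
  stmt15_general m α
end

section
/- Let 0 < a_1 < a_2 and δ = a_2 - a_1, and define Λ(x) = 1_{x≥0} (a_1 a_2 / δ)(e^{-a_1 x} - e^{-a_2 x}). Then for every positive integer n, Λ(x)^n = 1_{x≥0} (a_1 a_2/δ)^n Σ_{j=0}^n binom(n, j) (-1)^j e^{-(n a_1 + jδ)x}, and Λ^n is a positive scalar multiple of the hypoexponential density with rate parameters (n a_1, n a_1 + δ, ..., n a_1 + nδ); consequently there is a constant C > 0 such that ∫_ℝ e^{-sx} Λ(x)^n dx = C Π_{j=0}^n (s + n a_1 + jδ)^{-1} for Re s > -n a_1. -/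
open MeasureTheory Set

/-- The Hirschman–Widder density with parameter `(1/a₁, 1/a₂)`:
`Λ(x) = 1_{x≥0} (a₁ a₂ / δ)(e^{-a₁ x} - e^{-a₂ x})` with `δ = a₂ - a₁`. -/
noncomputable def hw2 (a₁ a₂ : ℝ) : ℝ → ℝ := fun x =>
  if 0 ≤ x then a₁ * a₂ / (a₂ - a₁) * (Real.exp (-a₁ * x) - Real.exp (-a₂ * x)) else 0

lemma norm_cexp_neg_mul (c : ℂ) (x : ℝ) : ‖Complex.exp (-c * x)‖ = Real.exp (-c.re * x) := by
  rw [Complex.norm_exp]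
  norm_num

lemma integrableOn_cexp_Ioi (c : ℂ) (hc : 0 < c.re) :
    IntegrableOn (fun x : ℝ => Complex.exp (-c * x)) (Ioi (0:ℝ)) := by
  refine (exp_neg_integrableOn_Ioi 0 hc).congr' ?_ ?_
  · apply Measurable.aestronglyMeasurable
    fun_prop
  · filter_upwards with x
    rw [norm_cexp_neg_mul, Real.norm_eq_abs, abs_of_pos (Real.exp_pos _)]

lemma integral_cexp_Ioi (c : ℂ) (hc : 0 < c.re) :
    ∫ x in Ioi (0:ℝ), Complex.exp (-c * x) = c⁻¹ := by
  have hc0 : c ≠ 0 := fun h => by simp [h] at hc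
  have hderiv : ∀ x ∈ Ici (0:ℝ), HasDerivAt (fun x : ℝ => -c⁻¹ * Complex.exp (-c * x))
      (Complex.exp (-c * x)) x := by
    intro x _
    have h1 : HasDerivAt (fun x : ℝ => -c * (x:ℂ)) (-c) x := by
      simpa using (Complex.ofRealCLM.hasDerivAt (x := x)).const_mul (-c)
    have := (h1.cexp).const_mul (-c⁻¹)
    have e : -c⁻¹ * (Complex.exp (-c * ↑x) * -c) = Complex.exp (-c * ↑x) := by
      rw [mul_comm (Complex.exp _) (-c), ← mul_assoc, neg_mul_neg, inv_mul_cancel₀ hc0, one_mul]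
    rwa [e] at this
  have htend : Filter.Tendsto (fun x : ℝ => -c⁻¹ * Complex.exp (-c * x)) Filter.atTop (nhds 0) := by
    rw [show (0:ℂ) = -c⁻¹ * 0 by ring]
    apply Filter.Tendsto.const_mul
    rw [tendsto_zero_iff_norm_tendsto_zero]
    simp only [norm_cexp_neg_mul]
    apply Real.tendsto_exp_atBot.comp
    have h2 : Filter.Tendsto (fun x : ℝ => c.re * x) Filter.atTop Filter.atTop :=
      Filter.Tendsto.const_mul_atTop hc Filter.tendsto_id
    have := Filter.tendsto_neg_atTop_atBot.comp h2
    exact this.congr (fun x => by simp only [Function.comp_apply]; ring)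
  have := integral_Ioi_of_hasDerivAt_of_tendsto' hderiv (integrableOn_cexp_Ioi c hc) htend
  rw [this]
  simp

lemma pf (n : ℕ) : ∀ z : ℂ, (∀ k, k ≤ n → z + k ≠ 0) →
    ∑ j ∈ Finset.range (n+1), (n.choose j : ℂ) * (-1)^j * (z + j)⁻¹
      = (n.factorial : ℂ) * ∏ j ∈ Finset.range (n+1), (z + j)⁻¹ := by
  induction n with
  | zero => intro z hz; simp
  | succ n ih =>
    intro z hz
    have hz0 : z ≠ 0 := by simpa using hz 0 (Nat.zero_le _)
    have hzn : z + (n+1 : ℕ) ≠ 0 := hz (n+1) le_rfl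
    have hz' : ∀ k, k ≤ n → z + 1 + k ≠ 0 := by
      intro k hk
      have h := hz (k+1) (by omega)
      have e : z + 1 + (k:ℂ) = z + ((k+1:ℕ):ℂ) := by push_cast; ring
      rw [e]; exact h
    have key1 : ∑ j ∈ Finset.range (n+1+1), ((n+1).choose j : ℂ) * (-1)^j * (z + j)⁻¹
        = (∑ j ∈ Finset.range (n+1), (n.choose j : ℂ) * (-1)^j * (z + j)⁻¹)
          - ∑ j ∈ Finset.range (n+1), (n.choose j : ℂ) * (-1)^j * (z + 1 + j)⁻¹ := by
      rw [Finset.sum_range_succ']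
      have expand : ∀ j ∈ Finset.range (n+1),
          (((n+1).choose (j+1) : ℂ)) * (-1)^(j+1) * (z + (j+1:ℕ))⁻¹
          = -((n.choose j : ℂ) * (-1)^j * (z + 1 + j)⁻¹)
            + (n.choose (j+1) : ℂ) * (-1)^(j+1) * (z + (j+1:ℕ))⁻¹ := by
        intro j _
        rw [Nat.choose_succ_succ]
        push_cast
        have : (z + (↑j + 1)) = z + 1 + j := by ring
        rw [this]
        ring
      rw [Finset.sum_congr rfl expand, Finset.sum_add_distrib, Finset.sum_neg_distrib]
      have shift : (∑ j ∈ Finset.range (n+1), (n.choose (j+1) : ℂ) * (-1)^(j+1) * (z + (j+1:ℕ))⁻¹)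
          + ((n+1).choose 0 : ℂ) * (-1)^0 * (z + (0:ℕ))⁻¹
          = ∑ j ∈ Finset.range (n+1), (n.choose j : ℂ) * (-1)^j * (z + j)⁻¹ := by
        rw [Finset.sum_range_succ]
        simp [Nat.choose_succ_self]
        rw [Finset.sum_range_succ' (fun j => (n.choose j : ℂ) * (-1)^j * (z + j)⁻¹) n]
        norm_num
      ring_nf
      ring_nf at shift
      linear_combination shift
    rw [key1, ih z (fun k hk => hz k (by omega)), ih (z+1) hz']
    set P := ∏ j ∈ Finset.range (n+2), (z + j)⁻¹ with hP
    have hA : ∏ j ∈ Finset.range (n+1), (z + j)⁻¹ = P * (z + ((n+1:ℕ):ℂ)) := by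
      have h2 : P = (∏ j ∈ Finset.range (n+1), (z + j)⁻¹) * (z + ((n+1:ℕ):ℂ))⁻¹ :=
        Finset.prod_range_succ (fun j => (z + (j:ℂ))⁻¹) (n+1)
      rw [h2, mul_assoc, inv_mul_cancel₀ hzn, mul_one]
    have hB : ∏ j ∈ Finset.range (n+1), (z + 1 + j)⁻¹ = P * z := by
      have h2 : P = (∏ j ∈ Finset.range (n+1), (z + ((j+1:ℕ):ℂ))⁻¹) * (z + ((0:ℕ):ℂ))⁻¹ :=
        Finset.prod_range_succ' (fun j => (z + (j:ℂ))⁻¹) (n+1)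
      have e : ∀ j ∈ Finset.range (n+1), (z + ((j+1:ℕ):ℂ))⁻¹ = (z + 1 + (j:ℂ))⁻¹ := by
        intro j _; push_cast; ring_nf
      rw [Finset.prod_congr rfl e] at h2
      rw [h2]
      push_cast
      rw [mul_assoc]
      norm_num [inv_mul_cancel₀ hz0]
    rw [hA, hB]
    have : ((n+1).factorial : ℂ) = (n.factorial : ℂ) * (n+1) := by
      rw [Nat.factorial_succ]; push_cast; ring
    rw [this]
    push_cast
    ring

lemma hw2_pow (a₁ a₂ : ℝ) (n : ℕ) (hn : 1 ≤ n) (x : ℝ) :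
    hw2 a₁ a₂ x ^ n =
      if 0 ≤ x then (a₁ * a₂ / (a₂ - a₁)) ^ n *
        ∑ j ∈ Finset.range (n + 1),
          (n.choose j : ℝ) * (-1) ^ j * Real.exp (-((n : ℝ) * a₁ + j * (a₂ - a₁)) * x)
      else 0 := by
  unfold hw2
  split_ifs with hx
  · rw [mul_pow]
    congr 1
    rw [sub_eq_add_neg, add_pow,
      ← Finset.sum_range_reflect (fun j => (n.choose j : ℝ) * (-1) ^ j *
        Real.exp (-((n : ℝ) * a₁ + j * (a₂ - a₁)) * x)) (n+1)]
    apply Finset.sum_congr rfl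
    intro k hk
    have hkn : k ≤ n := by simp at hk; omega
    simp only [Nat.add_sub_cancel]
    have hch : n.choose (n - k) = n.choose k := Nat.choose_symm hkn
    have e1 : Real.exp (-a₁ * x) ^ k = Real.exp ((k:ℝ) * (-a₁ * x)) :=
      (Real.exp_nat_mul _ _).symm
    have e2 : Real.exp (-a₂ * x) ^ (n - k) = Real.exp (((n-k:ℕ):ℝ) * (-a₂ * x)) :=
      (Real.exp_nat_mul _ _).symm
    have e3 : (k:ℝ) * (-a₁ * x) + ((n-k:ℕ):ℝ) * (-a₂ * x)
        = -((n : ℝ) * a₁ + ((n-k:ℕ):ℝ) * (a₂ - a₁)) * x := by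
      rw [Nat.cast_sub hkn]; ring
    rw [neg_pow, e1, e2, hch]
    rw [show Real.exp ((k:ℝ) * (-a₁ * x)) * ((-1:ℝ)^(n-k) * Real.exp (((n-k:ℕ):ℝ) * (-a₂ * x)))
          * (n.choose k : ℝ)
        = (n.choose k : ℝ) * (-1)^(n-k)
          * (Real.exp ((k:ℝ) * (-a₁ * x)) * Real.exp (((n-k:ℕ):ℝ) * (-a₂ * x))) from by ring]
    rw [← Real.exp_add, e3]
  · exact zero_pow (by omega)

/-- Powers of the two-parameter Hirschman–Widder density: the binomial expansion of
`Λ^n`, and the fact that `Λ^n` is a positive multiple of the hypoexponential density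
with rates `(n a₁, n a₁ + δ, …, n a₁ + n δ)`, as witnessed by its Laplace transform
`C ∏_{j=0}^n (s + n a₁ + j δ)⁻¹` for `Re s > -n a₁`. -/
theorem stmt17 (a₁ a₂ : ℝ) (h1 : 0 < a₁) (h12 : a₁ < a₂) (n : ℕ) (hn : 1 ≤ n) :
    (∀ x : ℝ, hw2 a₁ a₂ x ^ n =
      if 0 ≤ x then (a₁ * a₂ / (a₂ - a₁)) ^ n *
        ∑ j ∈ Finset.range (n + 1),
          (n.choose j : ℝ) * (-1) ^ j * Real.exp (-((n : ℝ) * a₁ + j * (a₂ - a₁)) * x)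
      else 0) ∧
    ∃ C : ℝ, 0 < C ∧ ∀ s : ℂ, -((n : ℝ) * a₁) < s.re →
      ∫ x : ℝ, Complex.exp (-(x : ℂ) * s) * ((hw2 a₁ a₂ x ^ n : ℝ) : ℂ) =
        (C : ℂ) * ∏ j ∈ Finset.range (n + 1),
          (s + (n : ℂ) * a₁ + (j : ℂ) * ((a₂ : ℂ) - a₁))⁻¹ := by
  have hδ : 0 < a₂ - a₁ := sub_pos.mpr h12
  refine ⟨hw2_pow a₁ a₂ n hn, ?_⟩
  have hfac : (0:ℝ) < n.factorial := by exact_mod_cast n.factorial_pos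
  refine ⟨(a₁ * a₂ / (a₂ - a₁)) ^ n * (n.factorial : ℝ) * (a₂ - a₁) ^ n,
    mul_pos (mul_pos (pow_pos (div_pos (mul_pos h1 (h1.trans h12)) hδ) n) hfac) (pow_pos hδ n), ?_⟩
  intro s hs
  set b : ℕ → ℝ := fun j => (n:ℝ) * a₁ + j * (a₂ - a₁) with hbdef
  have hbre : ∀ j : ℕ, 0 < (s + ((b j : ℝ):ℂ)).re := by
    intro j
    have h0 : (0:ℝ) ≤ (j:ℝ) * (a₂ - a₁) := by positivity
    simp only [Complex.add_re, Complex.ofReal_re, hbdef]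
    linarith
  have hsupp : ∀ x : ℝ, x ∉ Ioi (0:ℝ) →
      Complex.exp (-(x:ℂ) * s) * ((hw2 a₁ a₂ x ^ n : ℝ):ℂ) = 0 := by
    intro x hx
    simp only [mem_Ioi, not_lt] at hx
    have h0 : hw2 a₁ a₂ x = 0 := by
      unfold hw2
      split_ifs with h
      · have : x = 0 := le_antisymm hx h
        simp [this]
      · rfl
    rw [h0, zero_pow (by omega)]
    simp
  rw [← setIntegral_eq_integral_of_forall_compl_eq_zero hsupp]
  have hcong : ∀ x ∈ Ioi (0:ℝ),
      Complex.exp (-(x:ℂ) * s) * ((hw2 a₁ a₂ x ^ n : ℝ):ℂ)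
      = ∑ j ∈ Finset.range (n+1),
          (((a₁ * a₂ / (a₂ - a₁)) ^ n : ℝ):ℂ) * ((n.choose j : ℂ) * (-1)^j)
            * Complex.exp (-(s + ((b j : ℝ):ℂ)) * x) := by
    intro x hx
    rw [hw2_pow a₁ a₂ n hn x, if_pos (le_of_lt hx)]
    push_cast
    rw [Finset.mul_sum, Finset.mul_sum]
    apply Finset.sum_congr rfl
    intro j _
    have e : -(s + ((b j : ℝ):ℂ)) * x
        = -(x:ℂ) * s + ((-((n:ℝ) * a₁ + (j:ℝ) * (a₂ - a₁)) * x : ℝ) : ℂ) := by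
      rw [hbdef]; push_cast; ring
    rw [e, Complex.exp_add]
    push_cast
    ring_nf
  rw [setIntegral_congr_fun measurableSet_Ioi hcong]
  rw [integral_finset_sum _ (fun j _ => ((integrableOn_cexp_Ioi _ (hbre j)).const_mul _))]
  have hint : ∀ j ∈ Finset.range (n+1),
      ∫ x in Ioi (0:ℝ), (((a₁ * a₂ / (a₂ - a₁)) ^ n : ℝ):ℂ) * ((n.choose j : ℂ) * (-1)^j)
          * Complex.exp (-(s + ((b j : ℝ):ℂ)) * x)
      = (((a₁ * a₂ / (a₂ - a₁)) ^ n : ℝ):ℂ) * ((n.choose j : ℂ) * (-1)^j)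
          * (s + ((b j : ℝ):ℂ))⁻¹ := by
    intro j _
    rw [MeasureTheory.integral_const_mul, integral_cexp_Ioi _ (hbre j)]
  rw [Finset.sum_congr rfl hint]
  -- partial fractions
  set z : ℂ := (s + (((n:ℝ) * a₁ : ℝ):ℂ)) / (((a₂ - a₁ : ℝ)):ℂ) with hzdef
  have hδ0 : (((a₂ - a₁ : ℝ)):ℂ) ≠ 0 := by
    exact_mod_cast Complex.ofReal_ne_zero.mpr (ne_of_gt hδ)
  have hzre : 0 < z.re := by
    rw [hzdef, Complex.div_ofReal_re]
    apply div_pos _ hδ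
    simp only [Complex.add_re, Complex.ofReal_re]
    linarith
  have hz : ∀ k, k ≤ n → z + k ≠ 0 := by
    intro k _ h0
    have : 0 < (z + k).re := by
      simp only [Complex.add_re, Complex.natCast_re]
      have : (0:ℝ) ≤ k := Nat.cast_nonneg k
      linarith
    rw [h0] at this
    simp at this
  have hkey : ∀ j : ℕ, s + ((b j : ℝ):ℂ) = (((a₂ - a₁ : ℝ)):ℂ) * (z + j) := by
    intro j
    have hmul : (((a₂ - a₁ : ℝ)):ℂ) * z = s + (((n:ℝ) * a₁ : ℝ):ℂ) := by
      rw [hzdef, mul_comm, div_mul_cancel₀ _ hδ0]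
    rw [hbdef, mul_add, hmul]
    push_cast
    ring
  have hsum : ∑ j ∈ Finset.range (n+1),
      (((a₁ * a₂ / (a₂ - a₁)) ^ n : ℝ):ℂ) * ((n.choose j : ℂ) * (-1)^j) * (s + ((b j : ℝ):ℂ))⁻¹
      = (((a₁ * a₂ / (a₂ - a₁)) ^ n : ℝ):ℂ) * (((a₂ - a₁ : ℝ)):ℂ)⁻¹ *
        ∑ j ∈ Finset.range (n+1), (n.choose j : ℂ) * (-1)^j * (z + j)⁻¹ := by
    rw [Finset.mul_sum]
    apply Finset.sum_congr rfl
    intro j _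
    rw [hkey j, mul_inv]
    ring
  rw [hsum, pf n z hz]
  have hprod : ∏ j ∈ Finset.range (n+1), (z + j)⁻¹
      = (((a₂ - a₁ : ℝ)):ℂ)^(n+1) * ∏ j ∈ Finset.range (n+1),
          (s + (n:ℂ) * a₁ + (j:ℂ) * ((a₂:ℂ) - a₁))⁻¹ := by
    rw [show (((a₂ - a₁ : ℝ)):ℂ)^(n+1) = ∏ _j ∈ Finset.range (n+1), (((a₂ - a₁ : ℝ)):ℂ) by
        rw [Finset.prod_const, Finset.card_range]]
    rw [← Finset.prod_mul_distrib]
    apply Finset.prod_congr rfl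
    intro j _
    rw [show (s + (n:ℂ) * a₁ + (j:ℂ) * ((a₂:ℂ) - a₁)) = s + ((b j : ℝ):ℂ) by
        rw [hbdef]; push_cast; ring]
    rw [hkey j, mul_inv, ← mul_assoc, mul_inv_cancel₀ hδ0, one_mul]
  rw [hprod]
  have hδ0' : ((a₂:ℂ) - a₁) ≠ 0 := sub_ne_zero.mpr (by exact_mod_cast h12.ne')
  have hcanc : ((a₂:ℂ) - a₁)⁻¹ * ((a₂:ℂ) - a₁)^(n+1) = ((a₂:ℂ) - a₁)^n := by
    rw [pow_succ', inv_mul_cancel_left₀ hδ0']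
  push_cast
  linear_combination (((a₁:ℂ) * a₂ / ((a₂:ℂ) - a₁))^n * (n.factorial : ℂ) *
    ∏ j ∈ Finset.range (n+1), (s + (n:ℂ) * a₁ + (j:ℂ) * ((a₂:ℂ) - a₁))⁻¹) * hcanc
end
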